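/- Let V be a finite set, P a probability measure on Ω^V, f ∈ L²(Ω^V, P), and ν a probability distribution on the subsets of V (a random subset 𝒰 independent of the configuration). Suppose E[clue(f|𝒰)] = Σ_{S⊆V} ν(S)·clue(f|S) > c for some c ∈ (0,1]. Then for every integer k ≥ 1 there exists g ∈ L²(Ω^V, P) with Var(g) > 0 such that Σ_{W⊆V} ν^{⊕k}(W)·clue(g|W) ≥ 1 − 1/(k·c² + 1), where ν^{⊕k} denotes the distribution of the union of k independent copies of 𝒰 (whose revealment is at most k times the revealment of 𝒰). (Clue-boosting: partial expected clue from 𝒰 can be boosted to near-full expected clue from the union of k independent copies.) -/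

import Mathlib

open MeasureTheory ProbabilityTheory Filter Finset

namespace SR

/-- The σ-algebra generated by the coordinates in `U`. -/
def coordSigma (V : Type*) (Ω : Type*) [MeasurableSpace Ω] (U : Finset V) :
    MeasurableSpace (V → Ω) :=
  MeasurableSpace.comap (fun (ω : V → Ω) (u : U) => ω u) inferInstance

/-- `clue(f|U) = Var(E[f|F_U])/Var(f)`, with the convention that it is `0` when `Var f = 0`. -/
noncomputable def clue {V : Type*} {Ω : Type*} [MeasurableSpace Ω]
    (μ : Measure (V → Ω)) (f : (V → Ω) → ℝ) (U : Finset V) : ℝ :=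
  if variance f μ = 0 then 0
  else variance (μ[f | coordSigma V Ω U]) μ / variance f μ

/-- `ν` is a probability distribution on the subsets of `V` (a random subset of `V`). -/
def IsDist {V : Type*} [Fintype V] (ν : Finset V → ℝ) : Prop :=
  (∀ S, 0 ≤ ν S) ∧ ∑ S : Finset V, ν S = 1

/-- Expected clue `E[clue(f|𝒰)]` for a random subset with distribution `ν`. -/
noncomputable def eClue {V : Type*} [Fintype V] {Ω : Type*} [MeasurableSpace Ω]
    (μ : Measure (V → Ω)) (f : (V → Ω) → ℝ) (ν : Finset V → ℝ) : ℝ :=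
  ∑ S : Finset V, ν S * clue μ f S

/-- The revealment `δ(𝒰) = max_v P[v ∈ 𝒰]` of a random subset with distribution `ν`. -/
noncomputable def revealment {V : Type*} [Fintype V] [DecidableEq V] (ν : Finset V → ℝ) : ℝ :=
  sSup (Set.range fun v : V => ∑ S ∈ Finset.univ.filter (fun S : Finset V => v ∈ S), ν S)

/-- Covariance of two real random variables. -/
noncomputable def cov {α : Type*} [MeasurableSpace α] (μ : Measure α) (f g : α → ℝ) : ℝ :=
  ∫ x, (f x - ∫ y, f y ∂μ) * (g x - ∫ y, g y ∂μ) ∂μ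

/-- Standard deviation. -/
noncomputable def sd {α : Type*} [MeasurableSpace α] (μ : Measure α) (f : α → ℝ) : ℝ :=
  Real.sqrt (variance f μ)

/-- Correlation. -/
noncomputable def corr {α : Type*} [MeasurableSpace α] (μ : Measure α) (f g : α → ℝ) : ℝ :=
  cov μ f g / (sd μ f * sd μ g)

/-- Distribution of the union of `k` independent copies of a random subset with law `ν`. -/
noncomputable def unionPow {V : Type*} [Fintype V] [DecidableEq V]
    (ν : Finset V → ℝ) (k : ℕ) : Finset V → ℝ :=
  fun W => ∑ t ∈ Finset.univ.filter (fun t : Fin k → Finset V => Finset.univ.sup t = W),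
    ∏ i, ν (t i)

end SR

open MeasureTheory ProbabilityTheory SR

section Comb
open Finset
set_option linter.unusedSectionVars false
variable {β : Type*} [Fintype β] [DecidableEq β]

lemma sum_prod_one {ι : Type*} [Fintype ι] [DecidableEq ι] (ν : β → ℝ)
    (hν : ∑ b : β, ν b = 1) : ∑ t : ι → β, ∏ l : ι, ν (t l) = 1 := by
  have h := Finset.prod_univ_sum (fun _ : ι => (Finset.univ : Finset β)) (fun _ b => ν b)
  rw [Fintype.piFinset_univ] at h
  rw [← h]
  simp [hν]

lemma sum_prod_mul {ι : Type*} [Fintype ι] [DecidableEq ι] (ν : β → ℝ)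
    (hν : ∑ b : β, ν b = 1) (i : ι) (φ : β → ℝ) :
    ∑ t : ι → β, (∏ l : ι, ν (t l)) * φ (t i) = ∑ b : β, ν b * φ b := by
  classical
  rw [← Equiv.sum_comp (Equiv.funSplitAt i β).symm
    (fun t : ι → β => (∏ l : ι, ν (t l)) * φ (t i)), Fintype.sum_prod_type]
  have h_at_i : ∀ (b : β) (u : {j : ι // j ≠ i} → β),
      ((Equiv.funSplitAt i β).symm (b, u)) i = b := by
    intro b u; simp [Equiv.funSplitAt_symm_apply]
  have h_at_ne : ∀ (b : β) (u : {j : ι // j ≠ i} → β) (l : ι) (h : l ≠ i),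
      ((Equiv.funSplitAt i β).symm (b, u)) l = u ⟨l, h⟩ := by
    intro b u l h; simp [Equiv.funSplitAt_symm_apply, h]
  have key : ∀ (b : β) (u : {j : ι // j ≠ i} → β),
      (∏ l : ι, ν (((Equiv.funSplitAt i β).symm (b, u)) l))
        = ν b * ∏ l : {j : ι // j ≠ i}, ν (u l) := by
    intro b u
    rw [Finset.prod_eq_mul_prod_sdiff_singleton_of_mem (Finset.mem_univ i)]
    congr 1
    · rw [h_at_i]
    · rw [Finset.prod_subtype (p := fun l : ι => l ≠ i) (Finset.univ \ {i}) (by simp)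
        (fun l => ν (((Equiv.funSplitAt i β).symm (b, u)) l))]
      refine Finset.prod_congr rfl fun l _ => ?_
      rw [h_at_ne b u l l.2]
  have hsum : ∑ u : {j : ι // j ≠ i} → β, ∏ l : {j : ι // j ≠ i}, ν (u l) = 1 :=
    sum_prod_one ν hν
  calc ∑ b : β, ∑ u : {j : ι // j ≠ i} → β,
        (∏ l : ι, ν (((Equiv.funSplitAt i β).symm (b, u)) l))
          * φ (((Equiv.funSplitAt i β).symm (b, u)) i)
      = ∑ b : β, ∑ u : {j : ι // j ≠ i} → β,
        (ν b * φ b) * ∏ l : {j : ι // j ≠ i}, ν (u l) := by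
        refine Finset.sum_congr rfl fun b _ => Finset.sum_congr rfl fun u _ => ?_
        rw [key, h_at_i]; ring
    _ = ∑ b : β, ν b * φ b := by
        refine Finset.sum_congr rfl fun b _ => ?_
        rw [← Finset.mul_sum, hsum, mul_one]

lemma sum_prod_mul2 {ι : Type*} [Fintype ι] [DecidableEq ι] (ν : β → ℝ)
    (hν : ∑ b : β, ν b = 1) (i j : ι) (hij : i ≠ j) (φ : β → β → ℝ) :
    ∑ t : ι → β, (∏ l : ι, ν (t l)) * φ (t i) (t j)
      = ∑ b : β, ∑ b' : β, (ν b * ν b') * φ b b' := by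
  classical
  rw [← Equiv.sum_comp (Equiv.funSplitAt i β).symm
    (fun t : ι → β => (∏ l : ι, ν (t l)) * φ (t i) (t j)), Fintype.sum_prod_type]
  have h_at_i : ∀ (b : β) (u : {l : ι // l ≠ i} → β),
      ((Equiv.funSplitAt i β).symm (b, u)) i = b := by
    intro b u; simp [Equiv.funSplitAt_symm_apply]
  have h_at_ne : ∀ (b : β) (u : {l : ι // l ≠ i} → β) (l : ι) (h : l ≠ i),
      ((Equiv.funSplitAt i β).symm (b, u)) l = u ⟨l, h⟩ := by
    intro b u l h; simp [Equiv.funSplitAt_symm_apply, h]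
  have key : ∀ (b : β) (u : {l : ι // l ≠ i} → β),
      (∏ l : ι, ν (((Equiv.funSplitAt i β).symm (b, u)) l))
        = ν b * ∏ l : {l : ι // l ≠ i}, ν (u l) := by
    intro b u
    rw [Finset.prod_eq_mul_prod_sdiff_singleton_of_mem (Finset.mem_univ i)]
    congr 1
    · rw [h_at_i]
    · rw [Finset.prod_subtype (p := fun l : ι => l ≠ i) (Finset.univ \ {i}) (by simp)
        (fun l => ν (((Equiv.funSplitAt i β).symm (b, u)) l))]
      refine Finset.prod_congr rfl fun l _ => ?_
      rw [h_at_ne b u l l.2]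
  refine Finset.sum_congr rfl fun b _ => ?_
  have hstep : ∀ u : {l : ι // l ≠ i} → β,
      (∏ l : ι, ν (((Equiv.funSplitAt i β).symm (b, u)) l))
          * φ (((Equiv.funSplitAt i β).symm (b, u)) i)
            (((Equiv.funSplitAt i β).symm (b, u)) j)
        = ν b * ((∏ l : {l : ι // l ≠ i}, ν (u l)) * φ b (u ⟨j, hij.symm⟩)) := by
    intro u
    rw [key, h_at_i, h_at_ne b u j hij.symm]; ring
  rw [Finset.sum_congr rfl (fun u _ => hstep u), ← Finset.mul_sum,
    sum_prod_mul ν hν (⟨j, hij.symm⟩ : {l : ι // l ≠ i}) (fun b' => φ b b')]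
  rw [Finset.mul_sum]
  exact Finset.sum_congr rfl fun b' _ => by ring

end Comb



open MeasureTheory ProbabilityTheory SR

section Hil
set_option linter.unusedSectionVars false
variable {V : Type*} [Fintype V] [DecidableEq V] {Ω : Type*} [MeasurableSpace Ω]

local notation "⟪" x ", " y "⟫" => @inner ℝ _ _ x y

lemma coordSigma_le (S : Finset V) :
    coordSigma V Ω S ≤ (inferInstance : MeasurableSpace (V → Ω)) :=
  Measurable.comap_le (measurable_pi_lambda _ fun u => measurable_pi_apply _)

lemma coordSigma_mono {S W : Finset V} (h : S ⊆ W) :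
    coordSigma V Ω S ≤ coordSigma V Ω W := by
  have hcomp : (fun (ω : V → Ω) (u : S) => ω u) =
      (fun (x : W → Ω) (u : S) => x ⟨u.1, h u.2⟩) ∘ (fun (ω : V → Ω) (w : W) => ω w) := rfl
  rw [coordSigma, coordSigma, hcomp, ← MeasurableSpace.comap_comp]
  exact MeasurableSpace.comap_mono
    (Measurable.comap_le (measurable_pi_lambda _ fun u => measurable_pi_apply _))

variable (μ : Measure (V → Ω)) [IsProbabilityMeasure μ]

/-- The conditional-expectation projection on `L²` associated to a coordinate set. -/
noncomputable def Qop (S : Finset V) : Lp ℝ 2 μ →L[ℝ] Lp ℝ 2 μ :=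
  ((lpMeas ℝ ℝ (coordSigma V Ω S) 2 μ).subtypeL).comp (condExpL2 ℝ ℝ (coordSigma_le S))

lemma Qop_ae (S : Finset V) (x : Lp ℝ 2 μ) :
    AEStronglyMeasurable[coordSigma V Ω S] (Qop μ S x : (V → Ω) → ℝ) μ :=
  lpMeas.aestronglyMeasurable _

lemma inner_Qop_left (S : Finset V) (x y : Lp ℝ 2 μ) :
    ⟪Qop μ S x, y⟫ = ⟪x, Qop μ S y⟫ :=
  inner_condExpL2_left_eq_right (coordSigma_le S)

lemma Qop_of_mem {S : Finset V} {y : Lp ℝ 2 μ}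
    (hy : AEStronglyMeasurable[coordSigma V Ω S] (y : (V → Ω) → ℝ) μ) :
    Qop μ S y = y := by
  have hmem : y ∈ lpMeas ℝ ℝ (coordSigma V Ω S) 2 μ :=
    mem_lpMeas_iff_aestronglyMeasurable.mpr hy
  show ((condExpL2 ℝ ℝ (coordSigma_le S) y : lpMeas ℝ ℝ _ 2 μ) : Lp ℝ 2 μ) = y
  rw [condExpL2]
  haveI : Fact (coordSigma V Ω S ≤ (inferInstance : MeasurableSpace (V → Ω))) :=
    ⟨coordSigma_le S⟩
  exact congrArg Subtype.val
    (Submodule.orthogonalProjectionOnto_mem_subspace_eq_self (⟨y, hmem⟩ : lpMeas ℝ ℝ _ 2 μ))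

lemma norm_Qop_le (S : Finset V) (x : Lp ℝ 2 μ) : ‖Qop μ S x‖ ≤ ‖x‖ :=
  norm_condExpL2_coe_le (coordSigma_le S) x

lemma Qop_Qop {S W : Finset V} (h : S ⊆ W) (x : Lp ℝ 2 μ) :
    Qop μ W (Qop μ S x) = Qop μ S x :=
  Qop_of_mem μ ((Qop_ae μ S x).mono (coordSigma_mono h))

lemma inner_Qop_self (S : Finset V) (x : Lp ℝ 2 μ) :
    ⟪Qop μ S x, x⟫ = ‖Qop μ S x‖ ^ 2 := by
  calc ⟪Qop μ S x, x⟫ = ⟪Qop μ S (Qop μ S x), x⟫ := by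
        rw [Qop_Qop μ (subset_refl S)]
    _ = ⟪Qop μ S x, Qop μ S x⟫ := inner_Qop_left μ S _ _
    _ = ‖Qop μ S x‖ ^ 2 := real_inner_self_eq_norm_sq _

/-- the constant-one element of L². -/
noncomputable def one2 : Lp ℝ 2 μ :=
  indicatorConstLp 2 MeasurableSet.univ (measure_ne_top μ Set.univ) (1 : ℝ)

lemma Qop_one2 (S : Finset V) : Qop μ S (one2 μ) = one2 μ := by
  have h := condExpL2_indicator_of_measurable (𝕜 := ℝ) (coordSigma_le (Ω := Ω) S)
    (MeasurableSet.univ : MeasurableSet[coordSigma V Ω S] Set.univ)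
    (measure_ne_top μ Set.univ) (1 : ℝ)
  exact h

lemma integral_eq_inner_one2 (x : Lp ℝ 2 μ) : ∫ a, x a ∂μ = ⟪one2 μ, x⟫ := by
  rw [one2, L2.inner_indicatorConstLp_one MeasurableSet.univ (measure_ne_top μ Set.univ) x,
    Measure.restrict_univ]

lemma integral_Qop (S : Finset V) (x : Lp ℝ 2 μ) :
    ∫ a, (Qop μ S x : (V → Ω) → ℝ) a ∂μ = ∫ a, x a ∂μ := by
  rw [integral_eq_inner_one2, integral_eq_inner_one2]
  calc ⟪one2 μ, Qop μ S x⟫ = ⟪Qop μ S x, one2 μ⟫ := real_inner_comm _ _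
    _ = ⟪x, Qop μ S (one2 μ)⟫ := inner_Qop_left μ S _ _
    _ = ⟪x, one2 μ⟫ := by rw [Qop_one2]
    _ = ⟪one2 μ, x⟫ := real_inner_comm _ _

lemma variance_coe (x : Lp ℝ 2 μ) (h0 : ∫ a, x a ∂μ = 0) :
    variance (x : (V → Ω) → ℝ) μ = ‖x‖ ^ 2 := by
  rw [variance_of_integral_eq_zero (Lp.memLp x).aestronglyMeasurable.aemeasurable h0]
  have h : ∫ a, (((x : (V → Ω) → ℝ)) ^ 2) a ∂μ = ⟪x, x⟫ := by
    rw [L2.inner_def]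
    refine integral_congr_ae (Filter.Eventually.of_forall fun a => ?_)
    simp [RCLike.inner_apply, pow_two]
  rw [← real_inner_self_eq_norm_sq]
  exact h

lemma my_variance_congr {α : Type*} [MeasurableSpace α] {μ' : Measure α} {f g : α → ℝ}
    (h : f =ᵐ[μ'] g) : variance f μ' = variance g μ' := by
  have hint : ∫ a, f a ∂μ' = ∫ a, g a ∂μ' := integral_congr_ae h
  simp only [variance, evariance]
  congr 1
  refine lintegral_congr_ae ?_
  filter_upwards [h] with a ha
  rw [ha, hint]

lemma condexp_coe_ae (S : Finset V) (x : Lp ℝ 2 μ) :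
    μ[(x : (V → Ω) → ℝ) | coordSigma V Ω S] =ᵐ[μ] (Qop μ S x : (V → Ω) → ℝ) := by
  haveI : IsFiniteMeasure (μ.trim (coordSigma_le (Ω := Ω) S)) := isFiniteMeasure_trim _
  refine (ae_eq_condExp_of_forall_setIntegral_eq (coordSigma_le S)
    ((Lp.memLp x).integrable one_le_two) (fun s hs hμs => ?_) (fun s hs hμs => ?_)
    (Qop_ae μ S x)).symm
  · exact integrableOn_Lp_of_measure_ne_top _ fact_one_le_two_ennreal.elim hμs.ne
  · exact integral_condExpL2_eq_of_fin_meas_real (hm := coordSigma_le S) x hs hμs.ne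

lemma clue_coe (x : Lp ℝ 2 μ) (h0 : ∫ a, x a ∂μ = 0) (S : Finset V) :
    clue μ (x : (V → Ω) → ℝ) S = ‖Qop μ S x‖ ^ 2 / ‖x‖ ^ 2 := by
  have hvar : variance (μ[(x : (V → Ω) → ℝ) | coordSigma V Ω S]) μ = ‖Qop μ S x‖ ^ 2 := by
    rw [my_variance_congr (condexp_coe_ae μ S x)]
    exact variance_coe μ _ (by rw [integral_Qop]; exact h0)
  by_cases hx : variance (x : (V → Ω) → ℝ) μ = 0
  · rw [clue, if_pos hx]
    rw [variance_coe μ x h0] at hx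
    have hx0 : ‖x‖ = 0 := by
      have := norm_nonneg x; nlinarith
    have hq : ‖Qop μ S x‖ = 0 :=
      le_antisymm (hx0 ▸ norm_Qop_le μ S x) (norm_nonneg _)
    simp [hq, hx0]
  · rw [clue, if_neg hx, hvar, variance_coe μ x h0]


lemma my_variance_sub_const {α : Type*} [MeasurableSpace α] (μ' : Measure α)
    [IsProbabilityMeasure μ'] {f : α → ℝ} (hf : Integrable f μ') (a : ℝ) :
    variance (fun ω => f ω - a) μ' = variance f μ' := by
  have hint : ∫ ω, (f ω - a) ∂μ' = (∫ ω, f ω ∂μ') - a := by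
    rw [integral_sub hf (integrable_const a), integral_const]
    simp
  simp only [variance, evariance]
  congr 1
  refine lintegral_congr_ae (Filter.Eventually.of_forall fun ω => ?_)
  dsimp only
  rw [hint, sub_sub_sub_cancel_right]

lemma my_clue_congr {f g : (V → Ω) → ℝ} (h : f =ᵐ[μ] g) (S : Finset V) :
    clue μ f S = clue μ g S := by
  simp only [clue]
  rw [my_variance_congr h, my_variance_congr (condExp_congr_ae h)]

lemma clue_sub_const (f : (V → Ω) → ℝ) (hf : Integrable f μ) (a : ℝ) (S : Finset V) :
    clue μ (fun ω => f ω - a) S = clue μ f S := by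
  simp only [clue]
  rw [my_variance_sub_const μ hf a]
  by_cases h : variance f μ = 0
  · simp [h]
  · simp only [h, if_neg]
    congr 1
    have h1 : μ[(fun ω => f ω - a) | coordSigma V Ω S]
        =ᵐ[μ] μ[f | coordSigma V Ω S] - (fun _ => a) := by
      have h2 : (fun ω => f ω - a) = f - (fun _ => a) := rfl
      rw [h2]
      refine (condExp_sub hf (integrable_const a) _).trans ?_
      rw [condExp_const (coordSigma_le S)]
    rw [my_variance_congr h1]
    have h3 : (μ[f | coordSigma V Ω S] - (fun _ => a))
        = fun ω => (μ[f | coordSigma V Ω S]) ω - a := rfl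
    rw [h3, my_variance_sub_const μ integrable_condExp a]

variable (ν : Finset V → ℝ)

/-- averaged projection operator -/
noncomputable def Aop : Lp ℝ 2 μ →L[ℝ] Lp ℝ 2 μ := ∑ S : Finset V, ν S • Qop μ S

lemma inner_Aop (x y : Lp ℝ 2 μ) :
    ⟪Aop μ ν x, y⟫ = ∑ S : Finset V, ν S * ⟪Qop μ S x, y⟫ := by
  simp only [Aop, ContinuousLinearMap.sum_apply, ContinuousLinearMap.smul_apply, sum_inner,
    real_inner_smul_left]

lemma Aop_symm (x y : Lp ℝ 2 μ) : ⟪Aop μ ν x, y⟫ = ⟪x, Aop μ ν y⟫ := by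
  rw [inner_Aop, real_inner_comm (Aop μ ν y) x, inner_Aop]
  exact Finset.sum_congr rfl fun S _ => by rw [inner_Qop_left, real_inner_comm]

lemma inner_Aop_self (x : Lp ℝ 2 μ) :
    ⟪Aop μ ν x, x⟫ = ∑ S : Finset V, ν S * ‖Qop μ S x‖ ^ 2 := by
  rw [inner_Aop]
  exact Finset.sum_congr rfl fun S _ => by rw [inner_Qop_self]

lemma inner_Aop_self_nonneg (hν : ∀ S, 0 ≤ ν S) (x : Lp ℝ 2 μ) : 0 ≤ ⟪Aop μ ν x, x⟫ := by
  rw [inner_Aop_self]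
  exact Finset.sum_nonneg fun S _ => mul_nonneg (hν S) (sq_nonneg _)

lemma inner_Aop_self_le (hν : IsDist ν) (x : Lp ℝ 2 μ) : ⟪Aop μ ν x, x⟫ ≤ ‖x‖ ^ 2 := by
  rw [inner_Aop_self]
  calc ∑ S : Finset V, ν S * ‖Qop μ S x‖ ^ 2 ≤ ∑ S : Finset V, ν S * ‖x‖ ^ 2 := by
        refine Finset.sum_le_sum fun S _ => ?_
        exact mul_le_mul_of_nonneg_left
          (pow_le_pow_left₀ (norm_nonneg _) (norm_Qop_le μ S x) 2) (hν.1 S)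
    _ = ‖x‖ ^ 2 := by rw [← Finset.sum_mul, hν.2, one_mul]

lemma inner_Aop_eq_proj (x y : Lp ℝ 2 μ) :
    ⟪Aop μ ν x, y⟫ = ∑ S : Finset V, ν S * ⟪Qop μ S x, Qop μ S y⟫ := by
  rw [inner_Aop]
  refine Finset.sum_congr rfl fun S _ => ?_
  congr 1
  calc ⟪Qop μ S x, y⟫ = ⟪Qop μ S (Qop μ S x), y⟫ := by rw [Qop_Qop μ (subset_refl S)]
    _ = ⟪Qop μ S x, Qop μ S y⟫ := inner_Qop_left μ S _ _

lemma Aop_CS (hν : IsDist ν) (x y : Lp ℝ 2 μ) :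
    ⟪Aop μ ν x, y⟫ ^ 2 ≤ ⟪Aop μ ν x, x⟫ * ⟪Aop μ ν y, y⟫ := by
  have habs : |⟪Aop μ ν x, y⟫| ≤ ∑ S : Finset V, ν S * (‖Qop μ S x‖ * ‖Qop μ S y‖) := by
    rw [inner_Aop_eq_proj]
    refine (Finset.abs_sum_le_sum_abs _ _).trans (Finset.sum_le_sum fun S _ => ?_)
    rw [abs_mul, abs_of_nonneg (hν.1 S)]
    exact mul_le_mul_of_nonneg_left (abs_real_inner_le_norm _ _) (hν.1 S)
  have hsq : (∑ S : Finset V, ν S * (‖Qop μ S x‖ * ‖Qop μ S y‖)) ^ 2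
      ≤ (∑ S : Finset V, ν S * ‖Qop μ S x‖ ^ 2) * (∑ S : Finset V, ν S * ‖Qop μ S y‖ ^ 2) := by
    have h := Finset.sum_mul_sq_le_sq_mul_sq Finset.univ
      (fun S : Finset V => Real.sqrt (ν S) * ‖Qop μ S x‖)
      (fun S : Finset V => Real.sqrt (ν S) * ‖Qop μ S y‖)
    have e1 : ∀ S : Finset V,
        (Real.sqrt (ν S) * ‖Qop μ S x‖) * (Real.sqrt (ν S) * ‖Qop μ S y‖)
          = ν S * (‖Qop μ S x‖ * ‖Qop μ S y‖) := by
      intro S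
      rw [show (Real.sqrt (ν S) * ‖Qop μ S x‖) * (Real.sqrt (ν S) * ‖Qop μ S y‖)
          = (Real.sqrt (ν S) * Real.sqrt (ν S)) * (‖Qop μ S x‖ * ‖Qop μ S y‖) from by ring,
        Real.mul_self_sqrt (hν.1 S)]
    have e2 : ∀ S : Finset V,
        (Real.sqrt (ν S) * ‖Qop μ S x‖) ^ 2 = ν S * ‖Qop μ S x‖ ^ 2 := by
      intro S
      rw [mul_pow, Real.sq_sqrt (hν.1 S)]
    have e3 : ∀ S : Finset V,
        (Real.sqrt (ν S) * ‖Qop μ S y‖) ^ 2 = ν S * ‖Qop μ S y‖ ^ 2 := by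
      intro S
      rw [mul_pow, Real.sq_sqrt (hν.1 S)]
    calc (∑ S : Finset V, ν S * (‖Qop μ S x‖ * ‖Qop μ S y‖)) ^ 2
        = (∑ S : Finset V, (Real.sqrt (ν S) * ‖Qop μ S x‖)
            * (Real.sqrt (ν S) * ‖Qop μ S y‖)) ^ 2 := by
          congr 1; exact (Finset.sum_congr rfl fun S _ => (e1 S)).symm
      _ ≤ (∑ S : Finset V, (Real.sqrt (ν S) * ‖Qop μ S x‖) ^ 2)
            * ∑ S : Finset V, (Real.sqrt (ν S) * ‖Qop μ S y‖) ^ 2 := h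
      _ = (∑ S : Finset V, ν S * ‖Qop μ S x‖ ^ 2)
            * ∑ S : Finset V, ν S * ‖Qop μ S y‖ ^ 2 := by
          rw [Finset.sum_congr rfl fun S _ => e2 S, Finset.sum_congr rfl fun S _ => e3 S]
  calc ⟪Aop μ ν x, y⟫ ^ 2 = |⟪Aop μ ν x, y⟫| ^ 2 := (sq_abs _).symm
    _ ≤ (∑ S : Finset V, ν S * (‖Qop μ S x‖ * ‖Qop μ S y‖)) ^ 2 := by
        refine pow_le_pow_left₀ (abs_nonneg _) habs 2
    _ ≤ (∑ S : Finset V, ν S * ‖Qop μ S x‖ ^ 2) * (∑ S : Finset V, ν S * ‖Qop μ S y‖ ^ 2) := hsq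
    _ = ⟪Aop μ ν x, x⟫ * ⟪Aop μ ν y, y⟫ := by rw [inner_Aop_self, inner_Aop_self]

lemma Aop_one2 (hν : ∑ S : Finset V, ν S = 1) : Aop μ ν (one2 μ) = one2 μ := by
  simp only [Aop, ContinuousLinearMap.sum_apply, ContinuousLinearMap.smul_apply]
  rw [Finset.sum_congr rfl fun S _ => by rw [Qop_one2 μ S], ← Finset.sum_smul, hν, one_smul]


end Hil

section Power
set_option linter.unusedSectionVars false
variable {E : Type*} [NormedAddCommGroup E] [InnerProductSpace ℝ E]

local notation "⟪" x ", " y "⟫" => @inner ℝ _ _ x y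

/-- moment sequence of a positive contraction -/
noncomputable def pmom (A : E →L[ℝ] E) (x : E) (n : ℕ) : ℝ := ⟪(A ^ n) x, x⟫

variable (A : E →L[ℝ] E) (x : E)
variable (hsym : ∀ u v : E, ⟪A u, v⟫ = ⟪u, A v⟫)
variable (hpos : ∀ u : E, 0 ≤ ⟪A u, u⟫)
variable (hle : ∀ u : E, ⟪A u, u⟫ ≤ ‖u‖ ^ 2)
variable (hCS : ∀ u v : E, ⟪A u, v⟫ ^ 2 ≤ ⟪A u, u⟫ * ⟪A v, v⟫)

lemma pow_apply_succ (n : ℕ) (u : E) : (A ^ (n + 1)) u = A ((A ^ n) u) := by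
  rw [pow_succ']
  rfl

include hsym in
lemma inner_pow (a b : ℕ) : ⟪(A ^ a) x, (A ^ b) x⟫ = pmom A x (a + b) := by
  induction b generalizing a with
  | zero =>
    simp only [pow_zero, ContinuousLinearMap.one_apply, Nat.add_zero]
    rfl
  | succ b ih =>
    rw [pow_apply_succ, ← hsym ((A ^ a) x) ((A ^ b) x), ← pow_apply_succ]
    rw [ih (a + 1)]
    congr 1
    omega

include hsym in
lemma pmom_even (a : ℕ) : pmom A x (2 * a) = ‖(A ^ a) x‖ ^ 2 := by
  rw [← real_inner_self_eq_norm_sq, inner_pow A x hsym a a]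
  congr 1
  omega

include hsym in
lemma pmom_odd (a : ℕ) : pmom A x (2 * a + 1) = ⟪A ((A ^ a) x), (A ^ a) x⟫ := by
  rw [← pow_apply_succ, inner_pow A x hsym (a + 1) a]
  congr 1
  omega

include hsym hpos in
lemma pmom_nonneg (n : ℕ) : 0 ≤ pmom A x n := by
  rcases Nat.even_or_odd n with ⟨a, ha⟩ | ⟨a, ha⟩
  · rw [show n = 2 * a by omega, pmom_even A x hsym]
    positivity
  · rw [show n = 2 * a + 1 by omega, pmom_odd A x hsym]
    exact hpos _

include hsym hle in
lemma pmom_succ_le_even (a : ℕ) : pmom A x (2 * a + 1) ≤ pmom A x (2 * a) := by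
  rw [pmom_even A x hsym, pmom_odd A x hsym]
  exact hle _

include hsym hpos hle hCS in
lemma pmom_succ_le_odd (a : ℕ) : pmom A x (2 * a + 2) ≤ pmom A x (2 * a + 1) := by
  have h22 : pmom A x (2 * a + 2) = ‖A ((A ^ a) x)‖ ^ 2 := by
    rw [show 2 * a + 2 = 2 * (a + 1) by omega, pmom_even A x hsym, pow_apply_succ]
  rw [h22, pmom_odd A x hsym]
  set u := (A ^ a) x
  have h1 := hCS u (A u)
  have h2 : ⟪A u, A u⟫ = ‖A u‖ ^ 2 := real_inner_self_eq_norm_sq _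
  have h3 : ⟪A (A u), A u⟫ ≤ ‖A u‖ ^ 2 := hle (A u)
  have h4 : 0 ≤ ⟪A u, u⟫ := hpos u
  have h5 : 0 ≤ ‖A u‖ ^ 2 := sq_nonneg _
  rcases eq_or_lt_of_le h5 with h6 | h6
  · rw [← h6]; exact h4
  · nlinarith [h1, h2, h3, h4, h6]

include hsym hpos hle hCS in
lemma pmom_logconvex (n : ℕ) : pmom A x (n + 1) ^ 2 ≤ pmom A x n * pmom A x (n + 2) := by
  rcases Nat.even_or_odd n with ⟨a, ha⟩ | ⟨a, ha⟩
  · have hn : n = 2 * a := by omega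
    subst hn
    have e1 : pmom A x (2 * a + 1) = ⟪(A ^ (a + 1)) x, (A ^ a) x⟫ := by
      rw [inner_pow A x hsym]; congr 1; omega
    have e2 : pmom A x (2 * a + 2) = ‖(A ^ (a + 1)) x‖ ^ 2 := by
      rw [show 2 * a + 2 = 2 * (a + 1) by omega, pmom_even A x hsym]
    rw [e1, e2, pmom_even A x hsym]
    have := abs_real_inner_le_norm ((A ^ (a + 1)) x) ((A ^ a) x)
    calc ⟪(A ^ (a + 1)) x, (A ^ a) x⟫ ^ 2 = |⟪(A ^ (a + 1)) x, (A ^ a) x⟫| ^ 2 := (sq_abs _).symm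
      _ ≤ (‖(A ^ (a + 1)) x‖ * ‖(A ^ a) x‖) ^ 2 := by
          refine pow_le_pow_left₀ (abs_nonneg _) this 2
      _ = ‖(A ^ a) x‖ ^ 2 * ‖(A ^ (a + 1)) x‖ ^ 2 := by ring
  · have hn : n = 2 * a + 1 := by omega
    subst hn
    set u := (A ^ a) x
    set v := (A ^ (a + 1)) x
    have e1 : pmom A x (2 * a + 2) = ⟪A u, v⟫ := by
      rw [← pow_apply_succ, inner_pow A x hsym]
      congr 1; omega
    have e2 : pmom A x (2 * a + 1) = ⟪A u, u⟫ := pmom_odd A x hsym a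
    have e3 : pmom A x (2 * a + 3) = ⟪A v, v⟫ := by
      have h' := pmom_odd A x hsym (a + 1)
      rw [show 2 * (a + 1) + 1 = 2 * a + 3 by omega] at h'
      exact h'
    rw [e1, e2, e3]
    exact hCS u v

include hsym hpos hle hCS in
lemma pmom_pos (h0 : 0 < pmom A x 0) (h1 : 0 < pmom A x 1) (n : ℕ) : 0 < pmom A x n := by
  induction n using Nat.strong_induction_on with
  | _ n ih =>
    match n with
    | 0 => exact h0
    | 1 => exact h1
    | (m + 2) =>
      have hm := ih m (by omega)
      have hm1 := ih (m + 1) (by omega)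
      have hlc := pmom_logconvex A x hsym hpos hle hCS m
      nlinarith [hlc, hm, hm1]

include hsym hpos hle hCS in
lemma pmom_succ_le (n : ℕ) : pmom A x (n + 1) ≤ pmom A x n := by
  rcases Nat.even_or_odd n with ⟨a, ha⟩ | ⟨a, ha⟩
  · rw [show n = 2 * a by omega]
    exact pmom_succ_le_even A x hsym hle a
  · rw [show n = 2 * a + 1 by omega]
    exact pmom_succ_le_odd A x hsym hpos hle hCS a

include hsym hpos hle hCS in
lemma pmom_ratio_mono (h0 : 0 < pmom A x 0) (h1 : 0 < pmom A x 1) {i j : ℕ} (hij : i ≤ j) :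
    pmom A x (i + 1) / pmom A x i ≤ pmom A x (j + 1) / pmom A x j := by
  induction j with
  | zero => rw [Nat.le_zero.mp hij]
  | succ j ih =>
    rcases Nat.lt_or_ge i (j + 1) with h | h
    · refine (ih (by omega)).trans ?_
      have hpj := pmom_pos A x hsym hpos hle hCS h0 h1 j
      have hpj1 := pmom_pos A x hsym hpos hle hCS h0 h1 (j + 1)
      rw [div_le_div_iff₀ hpj hpj1]
      have := pmom_logconvex A x hsym hpos hle hCS j
      nlinarith [this]
    · rw [show i = j + 1 by omega]

include hsym hpos hle hCS in
lemma pmom_select (h0 : 0 < pmom A x 0) (h1 : 0 < pmom A x 1) (N : ℕ) (hN : 1 ≤ N) :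
    ∃ m : ℕ, pmom A x (2 * m + 1) / pmom A x (2 * m)
        ≥ pmom A x 1 / pmom A x 0 ∧
      pmom A x (2 * m + 2) / pmom A x (2 * m + 1)
        ≤ pmom A x (2 * m + 1) / pmom A x (2 * m) + 1 / (N : ℝ) := by
  by_contra hcon
  push_neg at hcon
  set r : ℕ → ℝ := fun n => pmom A x (n + 1) / pmom A x n with hr
  have hrmono : ∀ {i j : ℕ}, i ≤ j → r i ≤ r j := fun hij =>
    pmom_ratio_mono A x hsym hpos hle hCS h0 h1 hij
  have hstep : ∀ m : ℕ, r (2 * m) + 1 / (N : ℝ) < r (2 * m + 1) := by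
    intro m
    have := hcon m (hrmono (by omega))
    convert this using 2 <;> omega
  have hgrow : ∀ m : ℕ, r 0 + m * (1 / (N : ℝ)) ≤ r (2 * m) := by
    intro m
    induction m with
    | zero => simp
    | succ m ih =>
      have h1' := hstep m
      have h2' : r (2 * m + 1) ≤ r (2 * m + 2) := hrmono (by omega)
      have : r (2 * m) + 1 / (N : ℝ) ≤ r (2 * (m + 1)) := by
        rw [show 2 * (m + 1) = 2 * m + 2 by omega]
        linarith
      push_cast
      linarith
  have hbound : ∀ n : ℕ, r n ≤ 1 := by
    intro n
    have hp := pmom_pos A x hsym hpos hle hCS h0 h1 n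
    have hs := pmom_succ_le A x hsym hpos hle hCS n
    rw [hr]
    exact div_le_one_of_le₀ hs hp.le
  have hr0 : 0 < r 0 := div_pos h1 h0
  have hNr : (N : ℝ) > 0 := by positivity
  have := hgrow N
  have h2N := hbound (2 * N)
  have : r 0 + 1 ≤ 1 := by
    have hNN : (N : ℝ) * (1 / (N : ℝ)) = 1 := by field_simp
    nlinarith [this, h2N]
  linarith


end Power

section Main
set_option linter.unusedSectionVars false
set_option maxHeartbeats 1000000
variable {V : Type*} [Fintype V] [DecidableEq V] {Ω : Type*} [MeasurableSpace Ω]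

local notation "⟪" x ", " y "⟫" => @inner ℝ _ _ x y

lemma arith_num (c : ℝ) (hc0 : 0 < c) : 0 < c ^ 3 + c - c ^ 2 := by
  nlinarith [sq_nonneg (c - 1), mul_pos hc0 hc0, mul_pos (mul_pos hc0 hc0) hc0]

lemma eClue_unionPow (μ : Measure (V → Ω)) [IsProbabilityMeasure μ]
    (g : (V → Ω) → ℝ) (ν : Finset V → ℝ) (k : ℕ) :
    eClue μ g (unionPow ν k)
      = ∑ t : Fin k → Finset V, (∏ l, ν (t l)) * clue μ g (Finset.univ.sup t) := by
  classical
  rw [eClue, ← Finset.sum_fiberwise Finset.univ (fun t : Fin k → Finset V => Finset.univ.sup t)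
    (fun t => (∏ l, ν (t l)) * clue μ g (Finset.univ.sup t))]
  refine Finset.sum_congr rfl fun W _ => ?_
  rw [unionPow, Finset.sum_mul]
  refine Finset.sum_congr rfl fun t ht' => ?_
  have hW : Finset.univ.sup t = W := (Finset.mem_filter.mp ht').2
  rw [hW]

theorem clue_boosting'
    (μ : Measure (V → Ω)) [IsProbabilityMeasure μ]
    (f : (V → Ω) → ℝ) (hf : MemLp f 2 μ)
    (ν : Finset V → ℝ) (hν : IsDist ν)
    (c : ℝ) (hc0 : 0 < c) (hc1 : c ≤ 1)
    (hclue : c < eClue μ f ν)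
    (k : ℕ) (hk : 1 ≤ k) :
    ∃ g : (V → Ω) → ℝ, MemLp g 2 μ ∧ 0 < variance g μ ∧
      1 - 1 / ((k : ℝ) * c ^ 2 + 1) ≤ eClue μ g (unionPow ν k) := by
  classical
  have hfi : Integrable f μ := hf.integrable one_le_two
  have hVf : variance f μ ≠ 0 := by
    intro h
    have h2 : eClue μ f ν = 0 := by simp [eClue, clue, h]
    rw [h2] at hclue; linarith only [hclue, hc0]
  -- centered version of f in L²
  set a := ∫ ω, f ω ∂μ with ha
  have hf' : MemLp (fun ω => f ω - a) 2 μ := hf.sub (memLp_const a)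
  set F0 := hf'.toLp (fun ω => f ω - a) with hF0def
  have hcoe : (F0 : (V → Ω) → ℝ) =ᵐ[μ] fun ω => f ω - a := MemLp.coeFn_toLp hf'
  have h0 : ∫ ω, (F0 : (V → Ω) → ℝ) ω ∂μ = 0 := by
    rw [integral_congr_ae hcoe, integral_sub hfi (integrable_const a)]
    simp [ha]
  have hclue_eq : ∀ S, clue μ f S = ‖Qop μ S F0‖ ^ 2 / ‖F0‖ ^ 2 := by
    intro S
    rw [← clue_sub_const μ f hfi a S, my_clue_congr μ hcoe.symm S, clue_coe μ F0 h0 S]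
  have hvarF0 : variance f μ = ‖F0‖ ^ 2 := by
    rw [← my_variance_sub_const μ hfi a, my_variance_congr hcoe.symm, variance_coe μ F0 h0]
  have hF0pos : 0 < ‖F0‖ ^ 2 :=
    lt_of_le_of_ne (sq_nonneg _) (Ne.symm (hvarF0 ▸ hVf))
  -- the averaged projection operator
  set A := Aop μ ν with hA
  have hsym : ∀ u v : Lp ℝ 2 μ, ⟪A u, v⟫ = ⟪u, A v⟫ := Aop_symm μ ν
  have hposA : ∀ u : Lp ℝ 2 μ, 0 ≤ ⟪A u, u⟫ := inner_Aop_self_nonneg μ ν hν.1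
  have hleA : ∀ u : Lp ℝ 2 μ, ⟪A u, u⟫ ≤ ‖u‖ ^ 2 := inner_Aop_self_le μ ν hν
  have hCSA : ∀ u v : Lp ℝ 2 μ, ⟪A u, v⟫ ^ 2 ≤ ⟪A u, u⟫ * ⟪A v, v⟫ := Aop_CS μ ν hν
  have hp0 : pmom A F0 0 = ‖F0‖ ^ 2 := by
    rw [pmom, pow_zero, ContinuousLinearMap.one_apply, real_inner_self_eq_norm_sq]
  have hp1 : pmom A F0 1 = ⟪A F0, F0⟫ := by rw [pmom, pow_one]
  have hinit : c * pmom A F0 0 < pmom A F0 1 := by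
    have heq : eClue μ f ν = ⟪A F0, F0⟫ / ‖F0‖ ^ 2 := by
      rw [eClue, hA, inner_Aop_self, Finset.sum_div]
      exact Finset.sum_congr rfl fun S _ => by rw [hclue_eq S, mul_div_assoc]
    rw [heq, lt_div_iff₀ hF0pos] at hclue
    rw [hp0, hp1]; linarith only [hclue]
  have hp0pos : 0 < pmom A F0 0 := by rw [hp0]; exact hF0pos
  have hp1pos : 0 < pmom A F0 1 :=
    lt_of_le_of_lt (mul_nonneg hc0.le hp0pos.le) hinit
  -- choose ε and N
  have hk1 : (1 : ℝ) ≤ (k : ℝ) := by exact_mod_cast hk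
  set ε := (c ^ 3 + c - c ^ 2) / (((k : ℝ) - 1) * c ^ 2 + 1) with hεdef
  have hden : 0 < ((k : ℝ) - 1) * c ^ 2 + 1 := by
    have h := mul_nonneg (show (0 : ℝ) ≤ (k : ℝ) - 1 by linarith only [hk1]) (sq_nonneg c)
    linarith only [h]
  have hnum : 0 < c ^ 3 + c - c ^ 2 := arith_num c hc0
  have hεpos : 0 < ε := div_pos hnum hden
  have hεe : (((k : ℝ) - 1) * c ^ 2 + 1) * ε = c ^ 3 + c - c ^ 2 := by
    rw [hεdef, mul_div_cancel₀ _ (ne_of_gt hden)]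
  set N : ℕ := max ⌈1 / ε⌉₊ 1 with hNdef
  have hN1 : 1 ≤ N := le_max_right _ _
  have hNε : 1 / (N : ℝ) ≤ ε := by
    have h1 : (1 / ε) ≤ (⌈1 / ε⌉₊ : ℝ) := Nat.le_ceil _
    have h2 : ((⌈1 / ε⌉₊ : ℕ) : ℝ) ≤ (N : ℝ) := by exact_mod_cast le_max_left _ _
    have h3 : 0 < 1 / ε := by positivity
    have h4 := one_div_le_one_div_of_le h3 (h1.trans h2)
    rwa [one_div_one_div] at h4
  -- select the power m
  obtain ⟨m, hρ, hσ⟩ := pmom_select A F0 hsym hposA hleA hCSA hp0pos hp1pos N hN1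
  set p0 := pmom A F0 (2 * m) with hP0
  set p1 := pmom A F0 (2 * m + 1) with hP1
  set p2 := pmom A F0 (2 * m + 2) with hP2
  have hp0' : 0 < p0 := pmom_pos A F0 hsym hposA hleA hCSA hp0pos hp1pos _
  have hp1' : 0 < p1 := pmom_pos A F0 hsym hposA hleA hCSA hp0pos hp1pos _
  have hp2' : 0 < p2 := pmom_pos A F0 hsym hposA hleA hCSA hp0pos hp1pos _
  have hρ' : c * p0 < p1 := by
    have h2 : c < pmom A F0 1 / pmom A F0 0 :=
      (lt_div_iff₀ hp0pos).mpr (by linarith only [hinit])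
    have h3 : c < p1 / p0 := lt_of_lt_of_le h2 hρ
    rw [lt_div_iff₀ hp0'] at h3; linarith only [h3]
  have hσ' : p2 * p0 ≤ p1 ^ 2 + ε * (p1 * p0) := by
    have h4 : p2 / p1 ≤ p1 / p0 + ε := hσ.trans (by linarith only [hNε])
    have h4' : p2 / p1 * (p1 * p0) ≤ (p1 / p0 + ε) * (p1 * p0) :=
      mul_le_mul_of_nonneg_right h4 (mul_nonneg hp1'.le hp0'.le)
    have e1 : p2 / p1 * (p1 * p0) = p2 * p0 := by field_simp
    have e2 : (p1 / p0 + ε) * (p1 * p0) = p1 ^ 2 + ε * (p1 * p0) := by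
      field_simp
    rw [e1, e2] at h4'; exact h4'
  -- the boosted function
  set gL := (A ^ m) F0 with hgLdef
  have hint0 : ∀ n : ℕ, ∫ ω, ((A ^ n) F0 : (V → Ω) → ℝ) ω ∂μ = 0 := by
    intro n
    induction n with
    | zero => simpa [pow_zero, ContinuousLinearMap.one_apply] using h0
    | succ n ih =>
      rw [pow_apply_succ, integral_eq_inner_one2,
        real_inner_comm (A ((A ^ n) F0)) (one2 μ), hsym ((A ^ n) F0) (one2 μ),
        hA, Aop_one2 μ ν hν.2, real_inner_comm, ← integral_eq_inner_one2]
      exact ih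
  have hg0 : ∫ ω, (gL : (V → Ω) → ℝ) ω ∂μ = 0 := hint0 m
  have hgnorm : ‖gL‖ ^ 2 = p0 := by rw [hP0, pmom_even A F0 hsym m]
  refine ⟨(gL : (V → Ω) → ℝ), Lp.memLp _, ?_, ?_⟩
  · rw [variance_coe μ gL hg0, hgnorm]; exact hp0'
  -- main inequality
  have hclue_g : ∀ S, clue μ (gL : (V → Ω) → ℝ) S = ‖Qop μ S gL‖ ^ 2 / p0 := by
    intro S; rw [clue_coe μ gL hg0 S, hgnorm]
  have hAg : ⟪A gL, gL⟫ = p1 := by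
    rw [hgLdef, ← pow_apply_succ, inner_pow A F0 hsym, hP1]
    congr 1; omega
  have hAgg : ⟪A gL, A gL⟫ = p2 := by
    rw [hgLdef, ← pow_apply_succ, inner_pow A F0 hsym, hP2]
    congr 1; omega
  set w : (Fin k → Finset V) → ℝ := fun t => ∏ l, ν (t l) with hw
  have hwnn : ∀ t, 0 ≤ w t := fun t => Finset.prod_nonneg fun l _ => hν.1 _
  set hT : (Fin k → Finset V) → Lp ℝ 2 μ := fun t => ∑ i : Fin k, Qop μ (t i) gL with hhT
  have hsub : ∀ (t : Fin k → Finset V) (i : Fin k), t i ⊆ Finset.univ.sup t :=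
    fun t i => Finset.le_sup (Finset.mem_univ i)
  have hQW : ∀ t, Qop μ (Finset.univ.sup t) (hT t) = hT t := by
    intro t
    rw [hhT]
    simp only
    rw [map_sum]
    exact Finset.sum_congr rfl fun i _ => Qop_Qop μ (hsub t i) gL
  have hXt : ∀ t, ⟪hT t, gL⟫ = ⟪hT t, Qop μ (Finset.univ.sup t) gL⟫ := by
    intro t
    conv_lhs => rw [← hQW t]
    exact inner_Qop_left μ _ _ _
  have hXval : ∀ t, ⟪hT t, gL⟫ = ∑ i : Fin k, ⟪Qop μ (t i) gL, gL⟫ :=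
    fun t => sum_inner _ _ _
  have hsumφ : ∑ S : Finset V, ν S * ⟪Qop μ S gL, gL⟫ = p1 := by
    rw [← inner_Aop μ ν gL gL, ← hA, hAg]
  have hE1 : ∑ t : Fin k → Finset V, w t * ⟪hT t, gL⟫ = (k : ℝ) * p1 := by
    calc ∑ t : Fin k → Finset V, w t * ⟪hT t, gL⟫
        = ∑ t : Fin k → Finset V, ∑ i : Fin k, w t * ⟪Qop μ (t i) gL, gL⟫ := by
          refine Finset.sum_congr rfl fun t _ => ?_
          rw [hXval, Finset.mul_sum]
      _ = ∑ i : Fin k, ∑ t : Fin k → Finset V, w t * ⟪Qop μ (t i) gL, gL⟫ :=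
          Finset.sum_comm
      _ = ∑ _i : Fin k, p1 := by
          refine Finset.sum_congr rfl fun i _ => ?_
          rw [sum_prod_mul ν hν.2 i (fun S => ⟪Qop μ S gL, gL⟫), hsumφ]
      _ = (k : ℝ) * p1 := by
          rw [Finset.sum_const, Finset.card_univ, Fintype.card_fin, nsmul_eq_mul]
  have hdiag : ∑ S : Finset V, ν S * ⟪Qop μ S gL, Qop μ S gL⟫ = p1 := by
    rw [← inner_Aop_eq_proj μ ν gL gL, ← hA, hAg]
  have hoff : ∑ S : Finset V, ∑ S' : Finset V,
      (ν S * ν S') * ⟪Qop μ S gL, Qop μ S' gL⟫ = p2 := by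
    have h1 : ∀ S : Finset V, ∑ S' : Finset V,
        (ν S * ν S') * ⟪Qop μ S gL, Qop μ S' gL⟫ = ν S * ⟪A gL, Qop μ S gL⟫ := by
      intro S
      rw [hA, inner_Aop μ ν gL (Qop μ S gL), Finset.mul_sum]
      exact Finset.sum_congr rfl fun S' _ => by
        rw [real_inner_comm (Qop μ S gL) (Qop μ S' gL)]; ring
    rw [Finset.sum_congr rfl fun S _ => h1 S]
    have h2 : ∀ S : Finset V, ν S * ⟪A gL, Qop μ S gL⟫ = ν S * ⟪Qop μ S gL, A gL⟫ :=
      fun S => by rw [real_inner_comm]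
    rw [Finset.sum_congr rfl fun S _ => h2 S]
    rw [show (∑ S : Finset V, ν S * ⟪Qop μ S gL, A gL⟫) = ⟪Aop μ ν gL, A gL⟫ from
      (inner_Aop μ ν gL (A gL)).symm, ← hA, hAgg]
  have hnorm_hT : ∀ t, ‖hT t‖ ^ 2
      = ∑ i : Fin k, ∑ j : Fin k, ⟪Qop μ (t i) gL, Qop μ (t j) gL⟫ := by
    intro t
    rw [← real_inner_self_eq_norm_sq, hhT]
    simp only
    rw [sum_inner]
    exact Finset.sum_congr rfl fun i _ => inner_sum _ _ _
  have hE2 : ∑ t : Fin k → Finset V, w t * ‖hT t‖ ^ 2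
      = (k : ℝ) * p1 + ((k : ℝ) ^ 2 - (k : ℝ)) * p2 := by
    calc ∑ t : Fin k → Finset V, w t * ‖hT t‖ ^ 2
        = ∑ t : Fin k → Finset V, ∑ i : Fin k, ∑ j : Fin k,
            w t * ⟪Qop μ (t i) gL, Qop μ (t j) gL⟫ := by
          refine Finset.sum_congr rfl fun t _ => ?_
          rw [hnorm_hT, Finset.mul_sum]
          exact Finset.sum_congr rfl fun i _ => Finset.mul_sum _ _ _
      _ = ∑ i : Fin k, ∑ t : Fin k → Finset V, ∑ j : Fin k,
            w t * ⟪Qop μ (t i) gL, Qop μ (t j) gL⟫ := Finset.sum_comm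
      _ = ∑ i : Fin k, ∑ j : Fin k, ∑ t : Fin k → Finset V,
            w t * ⟪Qop μ (t i) gL, Qop μ (t j) gL⟫ := by
          exact Finset.sum_congr rfl fun i _ => Finset.sum_comm
      _ = ∑ i : Fin k, ∑ j : Fin k, (if i = j then p1 else p2) := by
          refine Finset.sum_congr rfl fun i _ => Finset.sum_congr rfl fun j _ => ?_
          by_cases hij : i = j
          · subst hij
            rw [if_pos rfl,
              sum_prod_mul ν hν.2 i (fun S => ⟪Qop μ S gL, Qop μ S gL⟫), hdiag]
          · rw [if_neg hij,
              sum_prod_mul2 ν hν.2 i j hij (fun S S' => ⟪Qop μ S gL, Qop μ S' gL⟫), hoff]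
      _ = ∑ _i : Fin k, (p1 + ((k : ℝ) - 1) * p2) := by
          refine Finset.sum_congr rfl fun i _ => ?_
          rw [← Finset.sum_erase_add Finset.univ _ (Finset.mem_univ i)]
          have herase : ∀ j ∈ Finset.univ.erase i, (if i = j then p1 else p2) = p2 :=
            fun j hj => if_neg fun h => (Finset.mem_erase.mp hj).1 h.symm
          rw [Finset.sum_congr rfl herase, Finset.sum_const,
            Finset.card_erase_of_mem (Finset.mem_univ i), Finset.card_univ,
            Fintype.card_fin, if_pos rfl, nsmul_eq_mul, Nat.cast_sub hk]
          push_cast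
          ring
      _ = (k : ℝ) * p1 + ((k : ℝ) ^ 2 - (k : ℝ)) * p2 := by
          rw [Finset.sum_const, Finset.card_univ, Fintype.card_fin, nsmul_eq_mul]
          ring
  -- Cauchy–Schwarz over the random tuples
  set Z := ∑ t : Fin k → Finset V, w t * ‖Qop μ (Finset.univ.sup t) gL‖ ^ 2 with hZ
  have hZnn : 0 ≤ Z :=
    Finset.sum_nonneg fun t _ => mul_nonneg (hwnn t) (sq_nonneg _)
  have hCSsum : ((k : ℝ) * p1) ^ 2
      ≤ Z * ((k : ℝ) * p1 + ((k : ℝ) ^ 2 - (k : ℝ)) * p2) := by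
    have hterm : ∀ t, w t * ⟪hT t, gL⟫
        ≤ (Real.sqrt (w t) * ‖Qop μ (Finset.univ.sup t) gL‖)
          * (Real.sqrt (w t) * ‖hT t‖) := by
      intro t
      have h1 : ⟪hT t, gL⟫ ≤ ‖hT t‖ * ‖Qop μ (Finset.univ.sup t) gL‖ := by
        rw [hXt t]; exact real_inner_le_norm _ _
      have h2 : Real.sqrt (w t) * Real.sqrt (w t) = w t := Real.mul_self_sqrt (hwnn t)
      calc w t * ⟪hT t, gL⟫ ≤ w t * (‖hT t‖ * ‖Qop μ (Finset.univ.sup t) gL‖) :=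
            mul_le_mul_of_nonneg_left h1 (hwnn t)
        _ = (Real.sqrt (w t) * ‖Qop μ (Finset.univ.sup t) gL‖)
              * (Real.sqrt (w t) * ‖hT t‖) := by
            rw [show (Real.sqrt (w t) * ‖Qop μ (Finset.univ.sup t) gL‖)
                  * (Real.sqrt (w t) * ‖hT t‖)
                = (Real.sqrt (w t) * Real.sqrt (w t))
                  * (‖hT t‖ * ‖Qop μ (Finset.univ.sup t) gL‖) from by ring, h2]
    have hsum_le : ∑ t : Fin k → Finset V, w t * ⟪hT t, gL⟫
        ≤ ∑ t : Fin k → Finset V, (Real.sqrt (w t) * ‖Qop μ (Finset.univ.sup t) gL‖)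
            * (Real.sqrt (w t) * ‖hT t‖) :=
      Finset.sum_le_sum fun t _ => hterm t
    have hnn : 0 ≤ ∑ t : Fin k → Finset V, w t * ⟪hT t, gL⟫ := by
      rw [hE1]; exact mul_nonneg (Nat.cast_nonneg k) hp1'.le
    have h2' : (∑ t : Fin k → Finset V, w t * ⟪hT t, gL⟫) ^ 2
        ≤ (∑ t : Fin k → Finset V, (Real.sqrt (w t) * ‖Qop μ (Finset.univ.sup t) gL‖)
            * (Real.sqrt (w t) * ‖hT t‖)) ^ 2 :=
      pow_le_pow_left₀ hnn hsum_le 2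
    have h3 := Finset.sum_mul_sq_le_sq_mul_sq Finset.univ
      (fun t : Fin k → Finset V => Real.sqrt (w t) * ‖Qop μ (Finset.univ.sup t) gL‖)
      (fun t : Fin k → Finset V => Real.sqrt (w t) * ‖hT t‖)
    have e2 : ∀ t : Fin k → Finset V,
        (Real.sqrt (w t) * ‖Qop μ (Finset.univ.sup t) gL‖) ^ 2
          = w t * ‖Qop μ (Finset.univ.sup t) gL‖ ^ 2 :=
      fun t => by rw [mul_pow, Real.sq_sqrt (hwnn t)]
    have e3 : ∀ t : Fin k → Finset V,
        (Real.sqrt (w t) * ‖hT t‖) ^ 2 = w t * ‖hT t‖ ^ 2 :=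
      fun t => by rw [mul_pow, Real.sq_sqrt (hwnn t)]
    calc ((k : ℝ) * p1) ^ 2 = (∑ t : Fin k → Finset V, w t * ⟪hT t, gL⟫) ^ 2 := by
          rw [hE1]
      _ ≤ (∑ t : Fin k → Finset V, (Real.sqrt (w t) * ‖Qop μ (Finset.univ.sup t) gL‖)
            * (Real.sqrt (w t) * ‖hT t‖)) ^ 2 := h2'
      _ ≤ (∑ t : Fin k → Finset V,
              (Real.sqrt (w t) * ‖Qop μ (Finset.univ.sup t) gL‖) ^ 2)
            * ∑ t : Fin k → Finset V, (Real.sqrt (w t) * ‖hT t‖) ^ 2 := h3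
      _ = Z * ∑ t : Fin k → Finset V, w t * ‖hT t‖ ^ 2 := by
          rw [Finset.sum_congr rfl fun t _ => e2 t, Finset.sum_congr rfl fun t _ => e3 t]
      _ = Z * ((k : ℝ) * p1 + ((k : ℝ) ^ 2 - (k : ℝ)) * p2) := by rw [hE2]
  -- final arithmetic
  have hKK : (0 : ℝ) ≤ (k : ℝ) ^ 2 - (k : ℝ) := by
    have h := mul_nonneg (show (0 : ℝ) ≤ (k : ℝ) by linarith only [hk1])
      (show (0 : ℝ) ≤ (k : ℝ) - 1 by linarith only [hk1])
    linarith only [h]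
  have hDpos : 0 < (k : ℝ) * p1 + ((k : ℝ) ^ 2 - (k : ℝ)) * p2 := by
    have h1 : 0 < (k : ℝ) * p1 :=
      mul_pos (by linarith only [hk1]) hp1'
    have h2 : 0 ≤ ((k : ℝ) ^ 2 - (k : ℝ)) * p2 := mul_nonneg hKK hp2'.le
    linarith only [h1, h2]
  have hEg : eClue μ (gL : (V → Ω) → ℝ) (unionPow ν k) = Z / p0 := by
    rw [eClue_unionPow μ (gL : (V → Ω) → ℝ) ν k, hZ, Finset.sum_div]
    exact Finset.sum_congr rfl fun t _ => by rw [hclue_g, mul_div_assoc]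
  rw [hEg]
  have hZge : ((k : ℝ) * p1) ^ 2 / ((k : ℝ) * p1 + ((k : ℝ) ^ 2 - (k : ℝ)) * p2) ≤ Z :=
    (div_le_iff₀ hDpos).mpr hCSsum
  have hKpos : 0 < (k : ℝ) * c ^ 2 + 1 := by positivity
  have hkc2 : (0 : ℝ) ≤ (k : ℝ) := Nat.cast_nonneg k
  have hgoal1 : 1 - 1 / ((k : ℝ) * c ^ 2 + 1) = (k : ℝ) * c ^ 2 / ((k : ℝ) * c ^ 2 + 1) := by
    field_simp
    ring
  -- key polynomial inequality
  have hS0 : ((k : ℝ) - 1) * c ^ 2 * ε = c ^ 3 + c - c ^ 2 - ε := by linarith only [hεe]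
  have hS1 : c ^ 2 * p0 + ((k : ℝ) - 1) * c ^ 2 * ε * p0 ≤ (c ^ 2 + 1) * p1 := by
    have t1 : c ^ 2 + ((k : ℝ) - 1) * c ^ 2 * ε ≤ c * (c ^ 2 + 1) := by
      linarith only [hS0, hεpos]
    have t2 := mul_le_mul_of_nonneg_right t1 hp0'.le
    have t3 : c * (c ^ 2 + 1) * p0 ≤ (c ^ 2 + 1) * p1 := by
      have h := mul_le_mul_of_nonneg_left hρ'.le (show (0 : ℝ) ≤ c ^ 2 + 1 by positivity)
      linarith only [h]
    linarith only [t2, t3]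
  have hkn : (0 : ℝ) ≤ (k : ℝ) ^ 2 * ((k : ℝ) - 1) * c ^ 2 :=
    mul_nonneg (mul_nonneg (sq_nonneg _) (by linarith only [hk1])) (sq_nonneg c)
  have hc1' := mul_le_mul_of_nonneg_left hσ' hkn
  have hc2' := mul_le_mul_of_nonneg_left hS1
    (mul_nonneg (sq_nonneg ((k : ℝ))) hp1'.le)
  have hkey : (k : ℝ) * c ^ 2 * (((k : ℝ) * p1 + ((k : ℝ) ^ 2 - (k : ℝ)) * p2) * p0)
      ≤ ((k : ℝ) * p1) ^ 2 * ((k : ℝ) * c ^ 2 + 1) := by linarith only [hc1', hc2']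
  calc 1 - 1 / ((k : ℝ) * c ^ 2 + 1)
      = (k : ℝ) * c ^ 2 / ((k : ℝ) * c ^ 2 + 1) := hgoal1
    _ ≤ ((k : ℝ) * p1) ^ 2 / (((k : ℝ) * p1 + ((k : ℝ) ^ 2 - (k : ℝ)) * p2) * p0) := by
        rw [div_le_div_iff₀ hKpos (mul_pos hDpos hp0')]
        linarith only [hkey]
    _ = (((k : ℝ) * p1) ^ 2 / ((k : ℝ) * p1 + ((k : ℝ) ^ 2 - (k : ℝ)) * p2)) / p0 :=
        (div_div _ _ _).symm
    _ ≤ Z / p0 := (div_le_div_iff_of_pos_right hp0').mpr hZge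

end Main

/-- **Clue boosting**: if the expected clue of `f` from a random subset `𝒰 ∼ ν` exceeds
`c ∈ (0,1]`, then for every `k ≥ 1` there is a nondegenerate function `g` whose expected clue
from the union of `k` independent copies of `𝒰` is at least `1 − 1/(k·c² + 1)`. -/
theorem clue_boosting
    {V : Type*} [Fintype V] [DecidableEq V]
    {Ω : Type*} [MeasurableSpace Ω]
    (μ : Measure (V → Ω)) [IsProbabilityMeasure μ]
    (f : (V → Ω) → ℝ) (hf : MemLp f 2 μ)
    (ν : Finset V → ℝ) (hν : IsDist ν)
    (c : ℝ) (hc0 : 0 < c) (hc1 : c ≤ 1)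
    (hclue : c < eClue μ f ν)
    (k : ℕ) (hk : 1 ≤ k) :
    ∃ g : (V → Ω) → ℝ, MemLp g 2 μ ∧ 0 < variance g μ ∧
      1 - 1 / ((k : ℝ) * c ^ 2 + 1) ≤ eClue μ g (unionPow ν k) :=
  clue_boosting' μ f hf ν hν c hc0 hc1 hclue k hk
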